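/- arXiv:2004.05018 — 3 statements merged into one kernel-verified Lean document; each statement's English description precedes it below -/
import Mathlib

section
/- Let G be a graph, let uv be an edge of G, and let G' be the graph obtained from G by subdividing uv once, i.e. deleting the edge uv and adding a new vertex w adjacent exactly to u and v. Then mimw(G) ≤ mimw(G') ≤ mimw(G) + 1. -/
open SimpleGraph

/-- `M` is an induced matching in the bipartite graph `G[X,Y]`: every pair in `M` is an
edge of `G` with first endpoint in `X` and second endpoint in `Y`, the pairs are pairwise
vertex-disjoint, and no edge of `G` between `X` and `Y` joins vertices incident to
distinct pairs of `M`. -/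
def IsInducedCutMatching {V : Type*} (G : SimpleGraph V) (X Y : Set V)
    (M : Finset (V × V)) : Prop :=
  (∀ p ∈ M, p.1 ∈ X ∧ p.2 ∈ Y ∧ G.Adj p.1 p.2) ∧
  ∀ p ∈ M, ∀ q ∈ M, p ≠ q →
    p.1 ≠ q.1 ∧ p.2 ≠ q.2 ∧ p.1 ≠ q.2 ∧ p.2 ≠ q.1 ∧
    ¬ G.Adj p.1 q.2 ∧ ¬ G.Adj q.1 p.2

/-- `cutmim G X Y` is the maximum size of an induced matching in `G[X,Y]`. -/
noncomputable def cutmim {V : Type*} (G : SimpleGraph V) (X Y : Set V) : ℕ :=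
  sSup {n : ℕ | ∃ M : Finset (V × V), IsInducedCutMatching G X Y M ∧ M.card = n}

/-- A branch decomposition of a graph `G`: a finite tree `T` of maximum degree at most 3
together with a bijection `δ` from the vertices of `G` to the leaves of `T`. -/
structure BranchDecomp {V : Type*} (G : SimpleGraph V) where
  L : Type
  T : SimpleGraph L
  finite : Finite L
  connected : T.Connected
  acyclic : T.IsAcyclic
  subcubic : ∀ x : L, (T.neighborSet x).ncard ≤ 3
  δ : V → L
  δ_inj : Function.Injective δ
  δ_leaf : ∀ v : V, (T.neighborSet (δ v)).ncard = 1
  δ_surj : ∀ x : L, (T.neighborSet x).ncard = 1 → ∃ v : V, δ v = x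

/-- The side of the cut of `V(G)` induced by the tree edge `ab`: the set of vertices of
`G` mapped by `δ` into the component of `T - ab` containing `a`. -/
def BranchDecomp.side {V : Type*} {G : SimpleGraph V} (B : BranchDecomp G)
    (a b : B.L) : Set V :=
  {v : V | (B.T.deleteEdges {s(a, b)}).Reachable (B.δ v) a}

/-- The mim-width of a branch decomposition: the maximum over tree edges `ab` of
`cutmim G (A_e, V(G) \ A_e)`. -/
noncomputable def BranchDecomp.width {V : Type*} {G : SimpleGraph V}
    (B : BranchDecomp G) : ℕ :=
  sSup {n : ℕ | ∃ a b : B.L, B.T.Adj a b ∧ n = cutmim G (B.side a b) (B.side a b)ᶜ}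

/-- The mim-width of a graph: the minimum width over all branch decompositions
(by convention `0` if no branch decomposition exists, e.g. for graphs with fewer
than two vertices). -/
noncomputable def mimw {V : Type*} (G : SimpleGraph V) : ℕ :=
  sInf {n : ℕ | ∃ B : BranchDecomp G, B.width = n}

/-- `G` is `H`-free: no induced subgraph of `G` is isomorphic to `H`. -/
def HFree {V W : Type*} (G : SimpleGraph V) (H : SimpleGraph W) : Prop :=
  ¬ ∃ S : Set V, Nonempty ((G.induce S) ≃g H)

/-- The disjoint union of two graphs. -/
def sumGraph {α β : Type*} (G : SimpleGraph α) (H : SimpleGraph β) :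
    SimpleGraph (α ⊕ β) :=
  SimpleGraph.fromRel (fun a b =>
    (∃ x y, a = Sum.inl x ∧ b = Sum.inl y ∧ G.Adj x y) ∨
    (∃ x y, a = Sum.inr x ∧ b = Sum.inr y ∧ H.Adj x y))

/-- `tP₂`: the disjoint union of `t` single edges. -/
def tP2graph (t : ℕ) : SimpleGraph (Fin t × Fin 2) :=
  SimpleGraph.fromRel (fun a b => a.1 = b.1)

/-- `sP₁ + P₂`: `s` isolated vertices together with a single edge. -/
def sP1P2graph (s : ℕ) : SimpleGraph (Fin s ⊕ Fin 2) :=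
  SimpleGraph.fromRel (fun a b => ∃ i j : Fin 2, a = Sum.inr i ∧ b = Sum.inr j)

/-- `K_r ⊟ K_r`: two disjoint copies of `K_r` joined by a perfect matching. -/
def KboxK (r : ℕ) : SimpleGraph (Fin r ⊕ Fin r) :=
  SimpleGraph.fromRel (fun a b =>
    (∃ i j, a = Sum.inl i ∧ b = Sum.inl j) ∨
    (∃ i j, a = Sum.inr i ∧ b = Sum.inr j) ∨
    (∃ i, a = Sum.inl i ∧ b = Sum.inr i))

/-- `K_r ⊟ rP₁`: a clique `a_1, …, a_r`, an independent set `b_1, …, b_r`, and the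
matching edges `a_i b_i`. -/
def KboxI (r : ℕ) : SimpleGraph (Fin r ⊕ Fin r) :=
  SimpleGraph.fromRel (fun a b =>
    (∃ i j, a = Sum.inl i ∧ b = Sum.inl j) ∨
    (∃ i, a = Sum.inl i ∧ b = Sum.inr i))

/-- `K_r ⊟ P₁`: `K_r` plus a pendant vertex attached to exactly one vertex of `K_r`. -/
def KboxP1 (r : ℕ) : SimpleGraph (Fin r ⊕ Unit) :=
  SimpleGraph.fromRel (fun a b =>
    (∃ i j : Fin r, a = Sum.inl i ∧ b = Sum.inl j) ∨
    (∃ i : Fin r, i.val = 0 ∧ a = Sum.inl i ∧ b = Sum.inr ()))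

/-- The claw `K_{1,3}`: vertex `0` adjacent to the three leaves `1`, `2`, `3`. -/
def clawGraph : SimpleGraph (Fin 4) :=
  SimpleGraph.fromRel (fun a _ => a = 0)

/-- The diamond: `K_4` minus the edge `{2,3}`. -/
def diamondGraph : SimpleGraph (Fin 4) :=
  SimpleGraph.fromRel (fun a b => ¬(a = 2 ∧ b = 3) ∧ ¬(a = 3 ∧ b = 2))

/-- The bowtie `⋈`: two triangles `{0,1,2}` and `{0,3,4}` sharing the vertex `0`. -/
def bowtieGraph : SimpleGraph (Fin 5) :=
  SimpleGraph.fromRel (fun a b => a = 0 ∨ (a = 1 ∧ b = 2) ∨ (a = 3 ∧ b = 4))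

/-- `P₁ + 2P₂`: the isolated vertex `0` and the two disjoint edges `12` and `34`. -/
def P1plus2P2graph : SimpleGraph (Fin 5) :=
  SimpleGraph.fromRel (fun a b => (a = 1 ∧ b = 2) ∨ (a = 3 ∧ b = 4))

/-- The subdivided claw `S_{1,1,5}`: centre `0` with leaves `1`, `2` at distance one and
the path `0-3-4-5-6-7`. -/
def S115graph : SimpleGraph (Fin 8) :=
  SimpleGraph.fromRel (fun a b =>
    (a = 0 ∧ b = 1) ∨ (a = 0 ∧ b = 2) ∨ (a = 0 ∧ b = 3) ∨
    (a = 3 ∧ b = 4) ∨ (a = 4 ∧ b = 5) ∨ (a = 5 ∧ b = 6) ∨ (a = 6 ∧ b = 7))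

/-- The Ramsey number `R(a,b)`: the least `N` such that every graph on at least `N`
vertices contains a clique of size `a` or an independent set of size `b`. -/
noncomputable def ramsey (a b : ℕ) : ℕ :=
  sInf {N : ℕ | ∀ M : ℕ, N ≤ M → ∀ G : SimpleGraph (Fin M),
    (∃ s : Finset (Fin M), G.IsNClique a s) ∨ (∃ s : Finset (Fin M), Gᶜ.IsNClique b s)}

/-- The `h × 2r` grid with the vertical edges prescribed by the wall construction:
the vertical edge between rows `i` and `i+1` of column `j` (all `0`-indexed) is kept
exactly when `i ≡ j (mod 2)`. -/
def wallPre (h r : ℕ) : SimpleGraph (Fin h × Fin (2 * r)) :=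
  SimpleGraph.fromRel (fun a b =>
    (a.1 = b.1 ∧ (a.2 : ℕ) + 1 = (b.2 : ℕ)) ∨
    (a.2 = b.2 ∧ (a.1 : ℕ) + 1 = (b.1 : ℕ) ∧ (a.1 : ℕ) % 2 = (a.2 : ℕ) % 2))

/-- The elementary `(h × r)`-wall: delete from `wallPre h r` all vertices of degree 1. -/
def elementaryWall (h r : ℕ) :
    SimpleGraph {v : Fin h × Fin (2 * r) // ((wallPre h r).neighborSet v).ncard ≠ 1} :=
  (wallPre h r).induce {v | ((wallPre h r).neighborSet v).ncard ≠ 1}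

/-- The graph obtained from `W` by simultaneously performing a clique implant on every
vertex of degree `3`: a degree-3 vertex `v` is replaced by the triangle of vertices
`(v, some u)` for `u` a neighbour of `v`, and `(v, some u)` inherits the edge of `v`
towards `u`; vertices of degree `≠ 3` are kept as `(v, none)`. -/
def cliqueImplantAll {V : Type*} (W : SimpleGraph V) :
    SimpleGraph {p : V × Option V //
      (p.2 = none ∧ (W.neighborSet p.1).ncard ≠ 3) ∨
      (∃ u, p.2 = some u ∧ (W.neighborSet p.1).ncard = 3 ∧ W.Adj p.1 u)} :=
  SimpleGraph.fromRel (fun a b =>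
    (a.1.1 = b.1.1 ∧ a.1.2 ≠ b.1.2) ∨
    (W.Adj a.1.1 b.1.1 ∧ (a.1.2 = none ∨ a.1.2 = some b.1.1) ∧
      (b.1.2 = none ∨ b.1.2 = some a.1.1)))

/-- A net-wall: the graph obtained from the elementary `(n × n)`-wall by performing a
clique implant on every vertex of degree `3`. -/
def netWall (n : ℕ) := cliqueImplantAll (elementaryWall n n)

/-- The chordal bipartite graph `G'` of Brault-Baron, Capelli and Mengel, built from a
graph `G`: vertices `x_v` (`Sum.inl v`), `y_v` (`Sum.inr (Sum.inl v)`), and for every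
ordered adjacent pair `p = (u,v)` two vertices `q_p = (p,0)` and `t_p = (p,1)`;
`X` is complete to `Y`, and for each adjacent pair `(u,v)` there is a path
`x_u - q_{(u,v)} - t_{(u,v)} - y_v`. -/
def BCMgraph {V : Type*} (G : SimpleGraph V) :
    SimpleGraph (V ⊕ V ⊕ ({p : V × V // G.Adj p.1 p.2} × Fin 2)) :=
  SimpleGraph.fromRel (fun a b =>
    (∃ u w : V, a = Sum.inl u ∧ b = Sum.inr (Sum.inl w)) ∨
    (∃ p : {p : V × V // G.Adj p.1 p.2},
      a = Sum.inl p.1.1 ∧ b = Sum.inr (Sum.inr (p, 0))) ∨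
    (∃ p : {p : V × V // G.Adj p.1 p.2},
      a = Sum.inr (Sum.inr (p, 0)) ∧ b = Sum.inr (Sum.inr (p, 1))) ∨
    (∃ p : {p : V × V // G.Adj p.1 p.2},
      a = Sum.inr (Sum.inr (p, 1)) ∧ b = Sum.inr (Sum.inl p.1.2)))

/-!
Deleting the leaf of the new vertex from a branch decomposition of `G'` and keeping the subtree
spanned by the remaining leaves gives a branch decomposition of `G` whose cuts are traces of cuts
of `G'`; an induced matching of `G` across such a cut survives in `G'`, its pair on `uv` being
rerouted through the new vertex. Conversely, turning the leaf of `u` into a cherry carrying `u` and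
the new vertex gives a branch decomposition of `G'` whose cuts are either the old ones, with the new
vertex joining `u`, or cut off a single vertex; across an old cut an induced matching of `G'` loses
at most its pair through `v` when read in `G`.
-/

open Sum

namespace IsInducedCutMatching

variable {V : Type*} {G : SimpleGraph V} {X Y : Set V} {M : Finset (V × V)}

theorem eq_of_fst_eq (hM : IsInducedCutMatching G X Y M) {p q : V × V} (hp : p ∈ M)
    (hq : q ∈ M) (h : p.1 = q.1) : p = q := by
  by_contra hne
  exact (hM.2 p hp q hq hne).1 h

theorem eq_of_snd_eq (hM : IsInducedCutMatching G X Y M) {p q : V × V} (hp : p ∈ M)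
    (hq : q ∈ M) (h : p.2 = q.2) : p = q := by
  by_contra hne
  exact (hM.2 p hp q hq hne).2.1 h

theorem eq_of_adj (hM : IsInducedCutMatching G X Y M) {p q : V × V} (hp : p ∈ M)
    (hq : q ∈ M) (hadj : G.Adj p.1 q.2) : p = q := by
  by_contra hne
  exact (hM.2 p hp q hq hne).2.2.2.2.1 hadj

theorem card_le [Finite V] (hM : IsInducedCutMatching G X Y M) : M.card ≤ Nat.card V := by
  classical
  have := Fintype.ofFinite V
  rw [Nat.card_eq_fintype_card, ← Finset.card_image_of_injOn (f := Prod.fst)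
    fun p hp q hq => hM.eq_of_fst_eq hp hq]
  exact Finset.card_le_univ _

theorem mono {N : Finset (V × V)} (hM : IsInducedCutMatching G X Y M) (hNM : N ⊆ M) :
    IsInducedCutMatching G X Y N :=
  ⟨fun p hp => hM.1 p (hNM hp), fun p hp q hq => hM.2 p (hNM hp) q (hNM hq)⟩

theorem card_filter_incident_le_one [DecidableEq V] (hM : IsInducedCutMatching G X Y M) (z : V) :
    (M.filter fun p : V × V => p.1 = z ∨ p.2 = z).card ≤ 1 := by
  refine Finset.card_le_one.2 fun p hp q hq => ?_
  rw [Finset.mem_filter] at hp hq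
  by_contra hne
  obtain ⟨h1, h2, h3, h4, -⟩ := hM.2 p hp.1 q hq.1 hne
  rcases hp.2 with rfl | rfl <;> rcases hq.2 with hq' | hq' <;> simp_all

theorem swap (hM : IsInducedCutMatching G X Y M) :
    IsInducedCutMatching G Y X (M.map ⟨Prod.swap, Prod.swap_injective⟩) := by
  simp only [IsInducedCutMatching, Finset.mem_map, Function.Embedding.coeFn_mk,
    forall_exists_index, and_imp, forall_apply_eq_imp_iff₂]
  refine ⟨fun p hp => ?_, fun p hp q hq hne => ?_⟩
  · obtain ⟨h1, h2, h3⟩ := hM.1 _ hp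
    exact ⟨h2, h1, h3.symm⟩
  · obtain ⟨h1, h2, h3, h4, h5, h6⟩ := hM.2 _ hp _ hq (by rintro rfl; exact hne rfl)
    exact ⟨h2, h1, h4, h3, fun h => h6 h.symm, fun h => h5 h.symm⟩

theorem iff_adj_iff_eq (hXY : Disjoint X Y) :
    IsInducedCutMatching G X Y M ↔
      (∀ p ∈ M, p.1 ∈ X ∧ p.2 ∈ Y) ∧ ∀ p ∈ M, ∀ q ∈ M, G.Adj p.1 q.2 ↔ p = q := by
  constructor
  · intro hM
    exact ⟨fun p hp => ⟨(hM.1 p hp).1, (hM.1 p hp).2.1⟩, fun p hp q hq =>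
      ⟨hM.eq_of_adj hp hq, by rintro rfl; exact (hM.1 p hp).2.2⟩⟩
  · rintro ⟨hside, hadj⟩
    have hXY' : ∀ p ∈ M, ∀ q ∈ M, p.1 ≠ q.2 := fun p hp q hq h =>
      hXY.ne_of_mem (hside p hp).1 (hside q hq).2 h
    refine ⟨fun p hp => ⟨(hside p hp).1, (hside p hp).2, (hadj p hp p hp).2 rfl⟩,
      fun p hp q hq hne => ⟨fun h => hne ?_, fun h => hne ?_, hXY' p hp q hq,
        fun h => hXY' q hq p hp h.symm, fun h => hne ((hadj p hp q hq).1 h),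
        fun h => hne ((hadj q hq p hp).1 h).symm⟩⟩
    · exact (hadj p hp q hq).1 (h ▸ (hadj q hq q hq).2 rfl)
    · exact (hadj p hp q hq).1 (h ▸ (hadj p hp p hp).2 rfl)

end IsInducedCutMatching

section cutmim

variable {V W : Type*} {G : SimpleGraph V} {H : SimpleGraph W} {X Y : Set V}

theorem le_cutmim [Finite V] {M : Finset (V × V)} (hM : IsInducedCutMatching G X Y M) :
    M.card ≤ cutmim G X Y :=
  le_csSup ⟨Nat.card V, by rintro n ⟨N, hN, rfl⟩; exact hN.card_le⟩ ⟨M, hM, rfl⟩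

theorem cutmim_le {n : ℕ} (h : ∀ M, IsInducedCutMatching G X Y M → M.card ≤ n) :
    cutmim G X Y ≤ n :=
  csSup_le' (by rintro m ⟨M, hM, rfl⟩; exact h M hM)

theorem cutmim_le_one_of_subsingleton_left (hX : X.Subsingleton) : cutmim G X Y ≤ 1 :=
  cutmim_le fun _ hM => Finset.card_le_one.2 fun p hp q hq =>
    hM.eq_of_fst_eq hp hq (hX (hM.1 p hp).1 (hM.1 q hq).1)

theorem cutmim_le_one_of_subsingleton_right (hY : Y.Subsingleton) : cutmim G X Y ≤ 1 :=
  cutmim_le fun _ hM => Finset.card_le_one.2 fun p hp q hq =>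
    hM.eq_of_snd_eq hp hq (hY (hM.1 p hp).2.1 (hM.1 q hq).2.1)

theorem IsInducedCutMatching.card_le_cutmim_of_adj_iff [Finite W] {X' : Set W}
    {M : Finset (V × V)} (hM : IsInducedCutMatching G X Xᶜ M) (α β : V → W)
    (hα : ∀ p ∈ M, α p.1 ∈ X') (hβ : ∀ p ∈ M, β p.2 ∈ X'ᶜ)
    (hadj : ∀ p ∈ M, ∀ q ∈ M, H.Adj (α p.1) (β q.2) ↔ G.Adj p.1 q.2) :
    M.card ≤ cutmim H X' X'ᶜ := by
  classical
  rw [IsInducedCutMatching.iff_adj_iff_eq disjoint_compl_right] at hM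
  have hinj : Set.InjOn (Prod.map α β) M := fun p hp q hq hpq => by
    rw [← (hM.2 p hp q hq), ← hadj p hp q hq]
    have hq2 : β q.2 = β p.2 := (congrArg Prod.snd hpq).symm
    rw [hq2]
    exact (hadj p hp p hp).2 ((hM.2 p hp p hp).2 rfl)
  rw [← Finset.card_image_of_injOn hinj]
  refine le_cutmim ((IsInducedCutMatching.iff_adj_iff_eq disjoint_compl_right).2 ⟨?_, ?_⟩)
  · simp only [Finset.mem_image]
    rintro _ ⟨p, hp, rfl⟩
    exact ⟨hα p hp, hβ p hp⟩
  · simp only [Finset.mem_image]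
    rintro _ ⟨p, hp, rfl⟩ _ ⟨q, hq, rfl⟩
    rw [Prod.map_fst, Prod.map_snd, hadj p hp q hq, hM.2 p hp q hq]
    exact ⟨congrArg _, fun h => hinj hp hq h⟩

theorem cutmim_comm {V : Type*} (G : SimpleGraph V) (X Y : Set V) :
    cutmim G X Y = cutmim G Y X := by
  have key : ∀ X Y : Set V,
      {n | ∃ M, IsInducedCutMatching G X Y M ∧ M.card = n} ⊆
        {n | ∃ M, IsInducedCutMatching G Y X M ∧ M.card = n} := by
    rintro X Y _ ⟨M, hM, rfl⟩
    exact ⟨_, hM.swap, Finset.card_map _⟩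
  exact congrArg sSup ((key X Y).antisymm (key Y X))

end cutmim

structure IsSubdivision {V : Type*} (G : SimpleGraph V) (u v : V)
    (G' : SimpleGraph (V ⊕ Unit)) : Prop where
  adj_inl_inl : ∀ x y, G'.Adj (inl x) (inl y) ↔ G.Adj x y ∧ s(x, y) ≠ s(u, v)
  adj_inl_inr : ∀ x, G'.Adj (inl x) (inr ()) ↔ x = u ∨ x = v

namespace IsSubdivision

variable {V : Type*} {G : SimpleGraph V} {u v : V} {G' : SimpleGraph (V ⊕ Unit)}

theorem of_adj_iff
    (hG' : ∀ a b : V ⊕ Unit, G'.Adj a b ↔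
      ((∃ x y : V, a = inl x ∧ b = inl y ∧ G.Adj x y ∧ s(x, y) ≠ s(u, v)) ∨
       (∃ x : V, (x = u ∨ x = v) ∧ ((a = inl x ∧ b = inr ()) ∨ (a = inr () ∧ b = inl x))))) :
    IsSubdivision G u v G' :=
  ⟨fun x y => by simp [hG'], fun x => by simp [hG']⟩

theorem adj_inr_inl (hG : IsSubdivision G u v G') (x : V) :
    G'.Adj (inr ()) (inl x) ↔ x = u ∨ x = v := by
  rw [G'.adj_comm, hG.adj_inl_inr]

theorem eq_inl_of_adj_inr (hG : IsSubdivision G u v G') {z : V ⊕ Unit}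
    (h : G'.Adj (inr ()) z) (hz : z ≠ inl u) : z = inl v := by
  rcases z with x | ⟨⟩
  · rcases (hG.adj_inr_inl x).1 h with rfl | rfl
    · exact absurd rfl hz
    · rfl
  · exact absurd h G'.irrefl

/-- A pair of the matching on the subdivided edge `uv` is rerouted through the new vertex. -/
theorem cutmim_preimage_inl_le [Finite V] (hG : IsSubdivision G u v G') (X' : Set (V ⊕ Unit)) :
    cutmim G (inl ⁻¹' X') (inl ⁻¹' X')ᶜ ≤ cutmim G' X' X'ᶜ := by
  classical
  wlog hw : inr () ∈ X' generalizing X'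
  · have := this X'ᶜ hw
    simp only [Set.preimage_compl, compl_compl] at this
    rwa [cutmim_comm G, cutmim_comm G'] at this
  refine cutmim_le fun M hM => ?_
  by_cases huv : ∃ p ∈ M, s(p.1, p.2) = s(u, v)
  · obtain ⟨p₀, hp₀, hp₀uv⟩ := huv
    have hside : ∀ p ∈ M, ∀ q ∈ M, p.1 ≠ q.2 := fun p hp q hq h =>
      (hM.1 q hq).2.1 (h ▸ (hM.1 p hp).1)
    refine hM.card_le_cutmim_of_adj_iff (Function.update inl p₀.1 (inr ())) inl ?_
      (fun p hp => (hM.1 p hp).2.1) fun p hp q hq => ?_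
    · intro p hp
      by_cases h : p.1 = p₀.1
      · simpa [h] using hw
      · simpa [h] using (hM.1 p hp).1
    by_cases hp₁ : p.1 = p₀.1
    · obtain rfl := hM.eq_of_fst_eq hp hp₀ hp₁
      rw [Function.update_self, hG.adj_inr_inl, ← Sym2.mem_iff, ← hp₀uv, Sym2.mem_iff,
        or_iff_right (hside _ hp _ hq).symm]
      exact ⟨fun h => hM.eq_of_snd_eq hp hq h.symm ▸ (hM.1 p hp).2.2,
        fun h => congrArg Prod.snd (hM.eq_of_adj hp hq h).symm⟩
    · rw [Function.update_of_ne hp₁, hG.adj_inl_inl, and_iff_left_iff_imp]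
      intro hadj h
      obtain rfl := hM.eq_of_adj hp hq hadj
      rw [← hp₀uv, Sym2.eq_iff] at h
      rcases h with ⟨h, -⟩ | ⟨h, -⟩
      · exact hp₁ h
      · exact hside p hp p₀ hp₀ h
  · refine hM.card_le_cutmim_of_adj_iff inl inl (fun p hp => (hM.1 p hp).1)
      (fun p hp => (hM.1 p hp).2.1) fun p hp q hq => ?_
    rw [hG.adj_inl_inl, and_iff_left_iff_imp]
    intro hadj
    obtain rfl := hM.eq_of_adj hp hq hadj
    exact fun h => huv ⟨p, hp, h⟩

/-- Only the pair through `inl v` can be lost: a pair through the new vertex must use `inl v`,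
since `u` lies on the same side as the new vertex. -/
theorem cutmim_preimage_le [Finite V] (hG : IsSubdivision G u v G') (X : Set V) :
    cutmim G' (Sum.elim id (fun _ => u) ⁻¹' X) (Sum.elim id (fun _ => u) ⁻¹' X)ᶜ ≤
      cutmim G X Xᶜ + 1 := by
  classical
  set π : V ⊕ Unit → V := Sum.elim id (fun _ => u)
  refine cutmim_le fun M hM => ?_
  have hinr : ∀ p ∈ M, (p.1 = inr () → p.2 = inl v) ∧ (p.2 = inr () → p.1 = inl v) := by
    rintro ⟨a, b⟩ hp
    obtain ⟨ha, hb, hab⟩ := hM.1 _ hp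
    refine ⟨fun h => hG.eq_inl_of_adj_inr (h ▸ hab) ?_,
      fun h => hG.eq_inl_of_adj_inr (h ▸ hab.symm) ?_⟩ <;> rintro rfl <;> subst h
    · exact hb ha
    · exact hb ha
  set N := M.filter fun p => ¬(p.1 = inl v ∨ p.2 = inl v)
  have hsplit : (M.filter fun p => p.1 = inl v ∨ p.2 = inl v).card + N.card = M.card :=
    Finset.card_filter_add_card_filter_not _
  have hlost := hM.card_filter_incident_le_one (inl v)
  have hN : IsInducedCutMatching G' (π ⁻¹' X) (π ⁻¹' X)ᶜ N := hM.mono (Finset.filter_subset _ _)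
  have hkept : N.card ≤ cutmim G X Xᶜ := by
    refine hN.card_le_cutmim_of_adj_iff π π (fun p hp => (hN.1 p hp).1)
      (fun p hp => (hN.1 p hp).2.1) fun p hp q hq => ?_
    obtain ⟨hpM, hp1, hp2⟩ := (Finset.mem_filter.1 hp).imp_right not_or.1
    obtain ⟨hqM, hq1, hq2⟩ := (Finset.mem_filter.1 hq).imp_right not_or.1
    rcases hp' : p.1 with a | ⟨⟩
    · rcases hq' : q.2 with b | ⟨⟩
      · change G.Adj a b ↔ _
        rw [hG.adj_inl_inl, Ne, Sym2.eq_iff, iff_self_and]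
        rintro - (⟨-, rfl⟩ | ⟨rfl, -⟩)
        · exact hq2 hq'
        · exact hp1 hp'
      · exact absurd ((hinr q hqM).2 hq') hq1
    · exact absurd ((hinr p hpM).1 hp') hp2
  omega

end IsSubdivision

namespace SimpleGraph

variable {α β : Type*} {H : SimpleGraph α}

theorem Reachable.map_of_adj {K : SimpleGraph β} (f : α → β)
    (hf : ∀ ⦃x y⦄, H.Adj x y → K.Reachable (f x) (f y)) {x y : α} (h : H.Reachable x y) :
    K.Reachable (f x) (f y) := by
  rw [reachable_iff_reflTransGen] at h ⊢
  exact Relation.ReflTransGen.lift' (p := K.Adj) f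
    (fun a b hab => (reachable_iff_reflTransGen _ _).1 (hf hab)) _ _ h

theorem Reachable.eq_of_forall_not_adj {x y : α} (h : H.Reachable y x) (hx : ∀ z, ¬H.Adj x z) :
    y = x := by
  obtain ⟨_ | ⟨hadj, _⟩⟩ := h.symm
  · rfl
  · exact absurd hadj (hx _)

theorem Reachable.deleteEdges_or {x a : α} (b : α) (h : H.Reachable x a) :
    (H.deleteEdges {s(a, b)}).Reachable x a ∨ (H.deleteEdges {s(a, b)}).Reachable x b := by
  obtain ⟨w⟩ := h
  induction w with
  | nil => exact Or.inl .rfl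
  | @cons x y a hxy _ ih =>
    by_cases he : s(x, y) = s(a, b)
    · rcases Sym2.eq_iff.1 he with ⟨rfl, -⟩ | ⟨rfl, -⟩
      · exact Or.inl .rfl
      · exact Or.inr .rfl
    · have hxy' : (H.deleteEdges {s(a, b)}).Adj x y := (deleteEdges_adj ..).2 ⟨hxy, he⟩
      exact ih.imp hxy'.reachable.trans hxy'.reachable.trans

theorem not_adj_deleteEdges_of_ncard_eq_one {a b : α} (hab : H.Adj a b)
    (ha : (H.neighborSet a).ncard = 1) (z : α) : ¬(H.deleteEdges {s(a, b)}).Adj a z := by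
  obtain ⟨c, hc⟩ := Set.ncard_eq_one.1 ha
  intro h
  rw [deleteEdges_adj] at h
  have hz : z ∈ H.neighborSet a := h.1
  have hb : b ∈ H.neighborSet a := hab
  rw [hc, Set.mem_singleton_iff] at hz hb
  exact h.2 (by rw [hz, ← hb]; rfl)

variable {L : Type*}

def addPendant (T : SimpleGraph L) (x₀ : L) : SimpleGraph (L ⊕ Unit) where
  Adj
    | inl x, inl y => T.Adj x y
    | inl x, inr _ => x = x₀
    | inr _, inl y => y = x₀
    | inr _, inr _ => False
  symm := ⟨by rintro (x | x) (y | y) h <;> first | exact h | exact h.symm⟩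
  loopless := ⟨by rintro (x | x) h; exacts [T.irrefl h, h]⟩

variable {T : SimpleGraph L} {x₀ : L}

@[simp] theorem addPendant_adj_inl_inl {x y : L} :
    (T.addPendant x₀).Adj (inl x) (inl y) ↔ T.Adj x y := Iff.rfl

@[simp] theorem addPendant_adj_inl_inr {x : L} {z : Unit} :
    (T.addPendant x₀).Adj (inl x) (inr z) ↔ x = x₀ := Iff.rfl

@[simp] theorem addPendant_adj_inr_inl {y : L} {z : Unit} :
    (T.addPendant x₀).Adj (inr z) (inl y) ↔ y = x₀ := Iff.rfl

theorem neighborSet_addPendant_inr {z : Unit} :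
    (T.addPendant x₀).neighborSet (inr z) = {inl x₀} := by
  ext (y | y) <;> simp

theorem ncard_neighborSet_addPendant_inr {z : Unit} :
    ((T.addPendant x₀).neighborSet (inr z)).ncard = 1 := by
  rw [neighborSet_addPendant_inr, Set.ncard_singleton]

theorem ncard_neighborSet_addPendant_inl_of_ne {x : L} (hx : x ≠ x₀) :
    ((T.addPendant x₀).neighborSet (inl x)).ncard = (T.neighborSet x).ncard := by
  have : (T.addPendant x₀).neighborSet (inl x) = inl '' T.neighborSet x := by
    ext (y | y) <;> simp [hx]
  rw [this, Set.ncard_image_of_injective _ Sum.inl_injective]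

theorem ncard_neighborSet_addPendant_inl_self [Finite L] :
    ((T.addPendant x₀).neighborSet (inl x₀)).ncard = (T.neighborSet x₀).ncard + 1 := by
  have : (T.addPendant x₀).neighborSet (inl x₀) = insert (inr ()) (inl '' T.neighborSet x₀) := by
    ext (y | y) <;> simp
  rw [this, Set.ncard_insert_of_notMem (by simp), Set.ncard_image_of_injective _ Sum.inl_injective]

/-- Deleting an old edge, the pendant vertex stays glued to `x₀`. -/
theorem addPendant_deleteEdges_reachable_iff (a b : L) {z z' : L ⊕ Unit} :
    ((T.addPendant x₀).deleteEdges {s(inl a, inl b)}).Reachable z z' ↔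
      (T.deleteEdges {s(a, b)}).Reachable (Sum.elim id (fun _ => x₀) z)
        (Sum.elim id (fun _ => x₀) z') := by
  constructor
  · refine fun h => h.map_of_adj _ ?_
    rintro (x | ⟨⟩) (y | ⟨⟩) hxy <;> simp only [deleteEdges_adj, Set.mem_singleton_iff,
      addPendant_adj_inl_inl, addPendant_adj_inl_inr, addPendant_adj_inr_inl] at hxy
    · refine Adj.reachable ((deleteEdges_adj ..).2 ⟨hxy.1, fun h => hxy.2 ?_⟩)
      rw [Set.mem_singleton_iff] at h
      simpa using h
    · simp [hxy.1]
    · simp [hxy.1]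
    · exact hxy.1.elim
  · have hglue : ∀ z, ((T.addPendant x₀).deleteEdges {s(inl a, inl b)}).Reachable z
        (inl (Sum.elim id (fun _ => x₀) z)) := by
      rintro (x | ⟨⟩)
      · rfl
      · exact Adj.reachable ((deleteEdges_adj ..).2 ⟨rfl, by simp⟩)
    refine fun h => (hglue z).trans (Reachable.trans ?_ (hglue z').symm)
    refine h.map_of_adj inl fun x y hxy => Adj.reachable ?_
    rw [deleteEdges_adj, Set.mem_singleton_iff] at hxy ⊢
    exact ⟨hxy.1, fun h => hxy.2 (by simpa using h)⟩

theorem Connected.addPendant (hT : T.Connected) : (T.addPendant x₀).Connected := by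
  have hreach : ∀ z, (T.addPendant x₀).Reachable z (inl x₀) := by
    rintro (x | ⟨⟩)
    · exact (hT.preconnected x x₀).map_of_adj inl fun x y hxy => Adj.reachable hxy
    · exact Adj.reachable rfl
  exact (connected_iff_exists_forall_reachable _).2 ⟨inl x₀, fun z => (hreach z).symm⟩

theorem IsAcyclic.addPendant (hT : T.IsAcyclic) : (T.addPendant x₀).IsAcyclic := by
  have hiso : ∀ w, ¬((T.addPendant x₀).deleteEdges {s(inr (), inl x₀)}).Adj (inr ()) w :=
    not_adj_deleteEdges_of_ncard_eq_one rfl ncard_neighborSet_addPendant_inr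
  rw [isAcyclic_iff_forall_adj_isBridge]
  rintro (x | ⟨⟩) (y | ⟨⟩) hxy <;> rw [isBridge_iff]
  · rw [addPendant_deleteEdges_reachable_iff]
    exact isAcyclic_iff_forall_adj_isBridge.1 hT hxy
  · rw [(addPendant_adj_inl_inr.1 hxy : x = x₀), Sym2.eq_swap]
    exact fun h => Sum.inl_ne_inr (h.eq_of_forall_not_adj hiso)
  · rw [(addPendant_adj_inr_inl.1 hxy : y = x₀)]
    exact fun h => Sum.inl_ne_inr (h.symm.eq_of_forall_not_adj hiso)
  · exact hxy.elim

/-- In a tree, the subtree spanned by `A`. -/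
def steinerSet (H : SimpleGraph α) (A : Set α) : Set α :=
  {x | ∃ a ∈ A, ∃ b ∈ A, ∃ p : H.Walk a b, p.IsPath ∧ x ∈ p.support}

theorem subset_steinerSet (A : Set α) : A ⊆ H.steinerSet A :=
  fun a ha => ⟨a, ha, a, ha, .nil, .nil, Walk.start_mem_support _⟩

theorem Preconnected.connected_induce_steinerSet (hH : H.Preconnected) {A : Set α}
    (hA : A.Nonempty) : (H.induce (H.steinerSet A)).Connected := by
  obtain ⟨a₀, ha₀⟩ := hA
  refine H.induce_connected_of_patches a₀ (subset_steinerSet A ha₀) fun {x} hx => ?_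
  obtain ⟨a, ha, b, hb, p, hp, hxp⟩ := hx
  obtain ⟨q, hq⟩ := (hH a₀ a).exists_isPath
  refine ⟨{y | y ∈ (q.append p).support}, fun y hy => ?_, (q.append p).start_mem_support,
    (Walk.mem_support_append_iff q p).2 (Or.inr hxp),
    (q.append p).connected_induce_support.preconnected _ _⟩
  rcases (Walk.mem_support_append_iff q p).1 hy with hy | hy
  · exact ⟨a₀, ha₀, a, ha, q, hq, hy⟩
  · exact ⟨a, ha, b, hb, p, hp, hy⟩

theorem IsAcyclic.mem_of_mem_support_of_preconnected_induce (hH : H.IsAcyclic) {S : Set α}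
    (hS : (H.induce S).Preconnected) {x y : α} (p : H.Walk x y) (hp : p.IsPath) (hx : x ∈ S)
    (hy : y ∈ S) {z : α} (hz : z ∈ p.support) : z ∈ S := by
  classical
  obtain ⟨w⟩ := hS ⟨x, hx⟩ ⟨y, hy⟩
  have hpw : p = (w.map (Embedding.induce S).toHom).bypass :=
    congrArg Subtype.val ((hH.subsingleton_path x y).elim ⟨p, hp⟩ ⟨_, Walk.bypass_isPath _⟩)
  have hz' := Walk.support_bypass_subset_support _ (hpw ▸ hz)
  have hwS : ∀ {u v : S} (w : (H.induce S).Walk u v),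
      ∀ t ∈ (w.map (Embedding.induce S).toHom).support, t ∈ S := by
    intro u v w t ht
    rw [Walk.support_map, List.mem_map] at ht
    obtain ⟨t', -, rfl⟩ := ht
    exact t'.2
  exact hwS w z hz'

theorem reachable_induce_iff {F : SimpleGraph α} {S : Set α} (hFH : F ≤ H)
    (hS : ∀ ⦃x y⦄ (p : H.Walk x y), p.IsPath → x ∈ S → y ∈ S → ∀ z ∈ p.support, z ∈ S)
    {x y : α} (hx : x ∈ S) (hy : y ∈ S) :
    (F.induce S).Reachable ⟨x, hx⟩ ⟨y, hy⟩ ↔ F.Reachable x y := by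
  refine ⟨fun h => h.map (Embedding.induce S).toHom, fun h => ?_⟩
  obtain ⟨p, hp⟩ := h.exists_isPath
  exact ⟨p.induce S fun z hz =>
    hS (p.mapLe hFH) (hp.mapLe hFH) hx hy z (by rwa [Walk.support_mapLe_eq_support])⟩

theorem induce_deleteEdges {S : Set α} (a b : S) :
    (H.induce S).deleteEdges {s(a, b)} = (H.deleteEdges {s(a.1, b.1)}).induce S := by
  ext x y
  simp only [deleteEdges_adj, comap_adj, Function.Embedding.subtype_apply,
    Set.mem_singleton_iff, Sym2.eq_iff, Subtype.ext_iff]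

theorem ncard_neighborSet_induce_le [Finite α] (S : Set α) (x : S) :
    ((H.induce S).neighborSet x).ncard ≤ (H.neighborSet x).ncard :=
  Set.ncard_le_ncard_of_injOn Subtype.val (fun _ hy => hy) Subtype.val_injective.injOn

theorem ncard_neighborSet_induce_steinerSet [Finite α] (hH : H.Preconnected) {A : Set α}
    {a b : α} (ha : a ∈ A) (hb : b ∈ A) (hab : a ≠ b) (hdeg : (H.neighborSet a).ncard = 1) :
    ((H.induce (H.steinerSet A)).neighborSet ⟨a, subset_steinerSet A ha⟩).ncard = 1 := by
  have hne : (⟨a, subset_steinerSet A ha⟩ : H.steinerSet A) ≠ ⟨b, subset_steinerSet A hb⟩ :=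
    fun h => hab (congrArg Subtype.val h)
  have hpos := (Set.ncard_pos (Set.toFinite _)).2
    (((hH.connected_induce_steinerSet ⟨a, ha⟩).preconnected _ _).nonempty_neighborSet_left hne)
  have hle := (ncard_neighborSet_induce_le (H := H) (H.steinerSet A)
    ⟨a, subset_steinerSet A ha⟩).trans hdeg.le
  omega

/-- A point of the Steiner set outside `A` is an inner vertex of a path, so it has two
neighbours on it. -/
theorem mem_of_subsingleton_neighborSet_induce_steinerSet {A : Set α} {x : H.steinerSet A}
    (hx : ((H.induce (H.steinerSet A)).neighborSet x).Subsingleton) : x.1 ∈ A := by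
  obtain ⟨z, a, ha, b, hb, p, hp, hz⟩ := x
  by_contra hzA
  have hpS : ∀ t ∈ p.support, t ∈ H.steinerSet A := fun t ht => ⟨a, ha, b, hb, p, hp, ht⟩
  have htrail : (p.induce _ hpS).IsTrail := by
    rw [← Walk.isTrail_map_iff_of_injective (f := (Embedding.induce _).toHom)
      Subtype.val_injective, Walk.map_induce]
    exact hp.isTrail
  refine htrail.not_mem_support_of_subsingleton_neighborSet
    (fun h => hzA (congrArg Subtype.val h ▸ ha)) (fun h => hzA (congrArg Subtype.val h ▸ hb))
    hx ?_
  simpa [Walk.support_induce] using hz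

end SimpleGraph

namespace BranchDecomp

variable {V : Type*} {G : SimpleGraph V}

theorem finite_vertices (B : BranchDecomp G) : Finite V :=
  have := B.finite
  Finite.of_injective B.δ B.δ_inj

variable (B : BranchDecomp G)

theorem side_subsingleton_of_leaf {a b : B.L} (hab : B.T.Adj a b)
    (ha : (B.T.neighborSet a).ncard = 1) : (B.side a b).Subsingleton := fun _ hx _ hy =>
  B.δ_inj <| (hx.eq_of_forall_not_adj (not_adj_deleteEdges_of_ncard_eq_one hab ha)).trans
    (hy.eq_of_forall_not_adj (not_adj_deleteEdges_of_ncard_eq_one hab ha)).symm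

theorem compl_side_subsingleton_of_leaf {a b : B.L} (hab : B.T.Adj a b)
    (hb : (B.T.neighborSet b).ncard = 1) : (B.side a b)ᶜ.Subsingleton := by
  have hiso := not_adj_deleteEdges_of_ncard_eq_one hab.symm hb
  rw [Sym2.eq_swap] at hiso
  have hδ : ∀ x ∈ (B.side a b)ᶜ, B.δ x = b := fun x hx =>
    ((B.connected.preconnected (B.δ x) a).deleteEdges_or b).resolve_left hx
      |>.eq_of_forall_not_adj hiso
  exact fun x hx y hy => B.δ_inj ((hδ x hx).trans (hδ y hy).symm)

theorem cutmim_side_le_one_of_leaf {a b : B.L} (hab : B.T.Adj a b)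
    (h : (B.T.neighborSet a).ncard = 1 ∨ (B.T.neighborSet b).ncard = 1) :
    cutmim G (B.side a b) (B.side a b)ᶜ ≤ 1 :=
  h.elim (fun ha => cutmim_le_one_of_subsingleton_left (B.side_subsingleton_of_leaf hab ha))
    fun hb => cutmim_le_one_of_subsingleton_right (B.compl_side_subsingleton_of_leaf hab hb)

theorem width_le {m : ℕ}
    (h : ∀ a b : B.L, B.T.Adj a b → cutmim G (B.side a b) (B.side a b)ᶜ ≤ m) : B.width ≤ m :=
  csSup_le' (by rintro n ⟨a, b, hab, rfl⟩; exact h a b hab)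

theorem cutmim_side_le_width {a b : B.L} (hab : B.T.Adj a b) :
    cutmim G (B.side a b) (B.side a b)ᶜ ≤ B.width := by
  have := B.finite
  refine le_csSup ((Set.finite_range fun p : B.L × B.L =>
    cutmim G (B.side p.1 p.2) (B.side p.1 p.2)ᶜ).subset ?_).bddAbove ⟨a, b, hab, rfl⟩
  rintro n ⟨a, b, -, rfl⟩
  exact ⟨(a, b), rfl⟩

end BranchDecomp

theorem mimw_le_mimw_add {V W : Type*} {G : SimpleGraph V} {H : SimpleGraph W} (k : ℕ)
    (hne : Nonempty (BranchDecomp G) → Nonempty (BranchDecomp H))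
    (hwidth : ∀ B : BranchDecomp H, ∃ B' : BranchDecomp G, B'.width ≤ B.width + k) :
    mimw G ≤ mimw H + k := by
  by_cases hH : Nonempty (BranchDecomp H)
  · obtain ⟨B⟩ := hH
    obtain ⟨B, hB⟩ := Nat.sInf_mem (s := {n | ∃ B : BranchDecomp H, B.width = n}) ⟨_, B, rfl⟩
    obtain ⟨B', hB'⟩ := hwidth B
    calc mimw G ≤ B'.width := Nat.sInf_le ⟨B', rfl⟩
      _ ≤ B.width + k := hB'
      _ = mimw H + k := by rw [hB]; rfl
  · have : IsEmpty (BranchDecomp G) := not_nonempty_iff.1 (mt hne hH)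
    simp [mimw]

namespace BranchDecomp

variable {V : Type*} {G : SimpleGraph V}

open Classical in
/-- The leaf of `u` becomes a cherry whose two leaves carry `u` and the new vertex `inr ()`. -/
noncomputable def addSibling (B : BranchDecomp G) (u : V) (G' : SimpleGraph (V ⊕ Unit)) :
    BranchDecomp G' where
  L := (B.L ⊕ Unit) ⊕ Unit
  T := (B.T.addPendant (B.δ u)).addPendant (inl (B.δ u))
  finite := have := B.finite; inferInstance
  connected := B.connected.addPendant.addPendant
  acyclic := B.acyclic.addPendant.addPendant
  subcubic := by
    have := B.finite
    rintro ((x | ⟨⟩) | ⟨⟩)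
    · by_cases hx : x = B.δ u
      · subst hx
        rw [ncard_neighborSet_addPendant_inl_self, ncard_neighborSet_addPendant_inl_self,
          B.δ_leaf]
      · rw [ncard_neighborSet_addPendant_inl_of_ne (by simpa using hx),
          ncard_neighborSet_addPendant_inl_of_ne hx]
        exact B.subcubic x
    · rw [ncard_neighborSet_addPendant_inl_of_ne (by simp), ncard_neighborSet_addPendant_inr]
      omega
    · rw [ncard_neighborSet_addPendant_inr]
      omega
  δ := Sum.elim (fun x => if x = u then inl (inr ()) else inl (inl (B.δ x))) fun _ => inr ()
  δ_inj := by
    rintro (x | ⟨⟩) (y | ⟨⟩) h <;> simp only [Sum.elim_inl, Sum.elim_inr] at h <;>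
      (try split_ifs at h) <;> simp_all [B.δ_inj.eq_iff]
  δ_leaf := by
    rintro (x | ⟨⟩)
    · by_cases hx : x = u
      · simp only [hx, Sum.elim_inl, if_true]
        rw [ncard_neighborSet_addPendant_inl_of_ne (by simp), ncard_neighborSet_addPendant_inr]
      · have hδ : B.δ x ≠ B.δ u := B.δ_inj.ne hx
        simp only [hx, Sum.elim_inl, if_false]
        rw [ncard_neighborSet_addPendant_inl_of_ne (by simpa using hδ),
          ncard_neighborSet_addPendant_inl_of_ne hδ, B.δ_leaf]
    · exact ncard_neighborSet_addPendant_inr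
  δ_surj := by
    have := B.finite
    rintro ((x | ⟨⟩) | ⟨⟩) hx
    · by_cases hxu : x = B.δ u
      · subst hxu
        rw [ncard_neighborSet_addPendant_inl_self, ncard_neighborSet_addPendant_inl_self,
          B.δ_leaf] at hx
        omega
      · rw [ncard_neighborSet_addPendant_inl_of_ne (by simpa using hxu),
          ncard_neighborSet_addPendant_inl_of_ne hxu] at hx
        obtain ⟨t, rfl⟩ := B.δ_surj x hx
        have htu : t ≠ u := fun h => hxu (h ▸ rfl)
        exact ⟨inl t, by simp [htu]⟩
    · exact ⟨inl u, by simp⟩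
    · exact ⟨inr (), rfl⟩

theorem side_addSibling (B : BranchDecomp G) (u : V) (G' : SimpleGraph (V ⊕ Unit)) (a b : B.L) :
    (B.addSibling u G').side (inl (inl a) : (B.L ⊕ Unit) ⊕ Unit) (inl (inl b)) =
      Sum.elim id (fun _ => u) ⁻¹' B.side a b := by
  classical
  ext z
  change (((B.T.addPendant (B.δ u)).addPendant (inl (B.δ u))).deleteEdges
      {s(inl (inl a), inl (inl b))}).Reachable
      (Sum.elim (fun x => if x = u then inl (inr ()) else inl (inl (B.δ x))) (fun _ => inr ()) z)
      (inl (inl a)) ↔ (B.T.deleteEdges {s(a, b)}).Reachable (B.δ (Sum.elim id (fun _ => u) z)) a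
  rw [addPendant_deleteEdges_reachable_iff, addPendant_deleteEdges_reachable_iff]
  rcases z with x | ⟨⟩
  · by_cases hx : x = u <;> simp [hx]
  · simp

end BranchDecomp

theorem IsSubdivision.width_addSibling_le {V : Type*} {G : SimpleGraph V} {u v : V}
    {G' : SimpleGraph (V ⊕ Unit)} (hG : IsSubdivision G u v G') (B : BranchDecomp G) :
    (B.addSibling u G').width ≤ B.width + 1 := by
  have := B.finite_vertices
  have hpendant : ∀ z : (B.L ⊕ Unit) ⊕ Unit, (∀ x, z ≠ inl (inl x)) →
      (((B.addSibling u G').T).neighborSet z).ncard = 1 := by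
    rintro ((x | ⟨⟩) | ⟨⟩) h
    · exact absurd rfl (h x)
    · exact (ncard_neighborSet_addPendant_inl_of_ne (by simp)).trans
        ncard_neighborSet_addPendant_inr
    · exact ncard_neighborSet_addPendant_inr
  refine BranchDecomp.width_le _ fun a b hab => ?_
  by_cases hleaf : (((B.addSibling u G').T).neighborSet a).ncard = 1 ∨
      (((B.addSibling u G').T).neighborSet b).ncard = 1
  · exact (BranchDecomp.cutmim_side_le_one_of_leaf _ hab hleaf).trans (by omega)
  obtain ⟨a, rfl⟩ : ∃ a', a = inl (inl a') := by
    by_contra! h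
    exact hleaf (Or.inl (hpendant a h))
  obtain ⟨b, rfl⟩ : ∃ b', b = inl (inl b') := by
    by_contra! h
    exact hleaf (Or.inr (hpendant b h))
  rw [B.side_addSibling]
  calc _ ≤ cutmim G (B.side a b) (B.side a b)ᶜ + 1 := hG.cutmim_preimage_le _
    _ ≤ B.width + 1 := Nat.add_le_add_right (B.cutmim_side_le_width hab) 1

namespace BranchDecomp

variable {V W : Type*} {H : SimpleGraph W}

theorem connected_induce_steinerSet (B : BranchDecomp H) (ι : V ↪ W) [Nonempty V] :
    (B.T.induce (B.T.steinerSet (Set.range (B.δ ∘ ι)))).Connected :=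
  B.connected.preconnected.connected_induce_steinerSet (Set.range_nonempty _)

noncomputable def restrict [Nontrivial V] (B : BranchDecomp H) (ι : V ↪ W)
    (G : SimpleGraph V) : BranchDecomp G where
  L := B.T.steinerSet (Set.range (B.δ ∘ ι))
  T := B.T.induce _
  finite := have := B.finite; inferInstance
  connected := B.connected_induce_steinerSet ι
  acyclic := B.acyclic.induce _
  subcubic x := have := B.finite; (ncard_neighborSet_induce_le _ x).trans (B.subcubic x)
  δ x := ⟨B.δ (ι x), subset_steinerSet _ ⟨x, rfl⟩⟩
  δ_inj x y h := ι.injective (B.δ_inj (congrArg Subtype.val h))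
  δ_leaf x := by
    have := B.finite
    obtain ⟨y, hyx⟩ := exists_ne x
    exact ncard_neighborSet_induce_steinerSet B.connected.preconnected (Set.mem_range_self x)
      (Set.mem_range_self y)
      (fun h => hyx (ι.injective (B.δ_inj h)).symm) (B.δ_leaf (ι x))
  δ_surj z hz := by
    have := B.finite
    obtain ⟨x, hx⟩ := mem_of_subsingleton_neighborSet_induce_steinerSet
      (Set.ncard_le_one_iff_subsingleton.1 hz.le)
    exact ⟨x, Subtype.ext hx⟩

theorem side_restrict [Nontrivial V] (B : BranchDecomp H) (ι : V ↪ W) (G : SimpleGraph V)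
    (a b : B.T.steinerSet (Set.range (B.δ ∘ ι))) :
    (B.restrict ι G).side a b = ι ⁻¹' B.side a b := by
  ext x
  change ((B.T.induce _).deleteEdges {s(a, b)}).Reachable ⟨B.δ (ι x), _⟩ a ↔
    (B.T.deleteEdges {s(a.1, b.1)}).Reachable (B.δ (ι x)) a
  rw [induce_deleteEdges]
  exact reachable_induce_iff (deleteEdges_le _) (fun _ _ p hp hx hy =>
    fun _ => B.acyclic.mem_of_mem_support_of_preconnected_induce
      (B.connected_induce_steinerSet ι).preconnected p hp hx hy) _ a.2

end BranchDecomp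

theorem IsSubdivision.width_restrict_le {V : Type*} [Nontrivial V] {G : SimpleGraph V}
    {u v : V} {G' : SimpleGraph (V ⊕ Unit)} (hG : IsSubdivision G u v G')
    (B : BranchDecomp G') : (B.restrict .inl G).width ≤ B.width := by
  have := B.finite_vertices
  have : Finite V := Finite.of_injective _ (Sum.inl_injective (β := Unit))
  refine BranchDecomp.width_le _ fun a b hab => ?_
  rw [B.side_restrict .inl G a b]
  exact (hG.cutmim_preimage_inl_le _).trans (B.cutmim_side_le_width hab)

theorem subdivision_mimw_general {V : Type*} (G : SimpleGraph V) (u v : V)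
    (huv : G.Adj u v) (G' : SimpleGraph (V ⊕ Unit))
    (hG' : ∀ a b : V ⊕ Unit, G'.Adj a b ↔
      ((∃ x y : V, a = Sum.inl x ∧ b = Sum.inl y ∧ G.Adj x y ∧ s(x, y) ≠ s(u, v)) ∨
       (∃ x : V, (x = u ∨ x = v) ∧
        ((a = Sum.inl x ∧ b = Sum.inr ()) ∨ (a = Sum.inr () ∧ b = Sum.inl x))))) :
    mimw G ≤ mimw G' ∧ mimw G' ≤ mimw G + 1 := by
  have hG := IsSubdivision.of_adj_iff hG'
  have : Nontrivial V := ⟨u, v, huv.ne⟩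
  exact ⟨mimw_le_mimw_add 0 (fun ⟨B⟩ => ⟨B.addSibling u G'⟩)
      fun B' => ⟨B'.restrict .inl G, hG.width_restrict_le B'⟩,
    mimw_le_mimw_add 1 (fun ⟨B'⟩ => ⟨B'.restrict .inl G⟩)
      fun B => ⟨B.addSibling u G', hG.width_addSibling_le B⟩⟩

/-- Let `G'` be obtained from `G` by subdividing the edge `uv` once
(delete `uv`, add a new vertex `w = Sum.inr ()` adjacent exactly to `u` and `v`).
Then `mimw(G) ≤ mimw(G') ≤ mimw(G) + 1`. -/
theorem subdivision_mimw {V : Type*} [Finite V] (G : SimpleGraph V) (u v : V)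
    (huv : G.Adj u v) (G' : SimpleGraph (V ⊕ Unit))
    (hG' : ∀ a b : V ⊕ Unit, G'.Adj a b ↔
      ((∃ x y : V, a = Sum.inl x ∧ b = Sum.inl y ∧ G.Adj x y ∧ s(x, y) ≠ s(u, v)) ∨
       (∃ x : V, (x = u ∨ x = v) ∧
        ((a = Sum.inl x ∧ b = Sum.inr ()) ∨ (a = Sum.inr () ∧ b = Sum.inl x))))) :
    mimw G ≤ mimw G' ∧ mimw G' ≤ mimw G + 1 :=
  subdivision_mimw_general G u v huv G' hG'
end

section
/- Let r ≥ 3 and let G be a (K_r ⊟ rP_1, 2P_2)-free graph. Then for every X ⊆ V(G), cutmim_G(X, V(G)∖X) < max{6, r}. In particular, mimw(G) < max{6, r}. -/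
open SimpleGraph

/-! Let `a_i b_i` (`i < m`, `m ≥ max 6 r`) be an induced matching across a cut. As `G` is
`2P₂`-free, for `i ≠ j` one of `a_i a_j`, `b_i b_j` is an edge, and no edge `a_i a_j` is
disjoint in indices from an edge `b_k b_l`. If some `a_i a_j` is an edge, then for any edge
`b_k b_l` there are two more indices `s, t` (this is where `m ≥ 6` enters), and whichever of
`a_s a_t`, `b_s b_t` is an edge is disjoint from one of the two. Hence the `b_i` are independent,
the `a_i` form a clique, and `r` of the pairs induce `K_r ⊟ rP₁`; otherwise the roles of the
`a_i` and `b_i` are swapped. -/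

section

variable {V ι : Type*}

theorem HFree.not_isIndContained {W : Type*} {G : SimpleGraph V} {H : SimpleGraph W}
    (h : HFree G H) : ¬ H ⊴ G := fun hHG =>
  let ⟨s, ⟨e⟩⟩ := isIndContained_iff_exists_iso_induce.mp hHG
  h ⟨s, ⟨e.symm⟩⟩

theorem HFree.adj_between_of_adj_of_adj {G : SimpleGraph V} (h : HFree G (tP2graph 2))
    {u v x y : V} (huv : G.Adj u v) (hxy : G.Adj x y) :
    G.Adj u x ∨ G.Adj u y ∨ G.Adj v x ∨ G.Adj v y := by
  by_contra! hno
  obtain ⟨hux, huy, hvx, hvy⟩ := hno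
  have hux' : u ≠ x := fun h => huy (h ▸ hxy)
  have huy' : u ≠ y := fun h => hux (h ▸ hxy.symm)
  have hvx' : v ≠ x := fun h => hvy (h ▸ hxy)
  have hvy' : v ≠ y := fun h => hvx (h ▸ hxy.symm)
  let f : Fin 2 × Fin 2 → V := fun p => ![![u, v], ![x, y]] p.1 p.2
  have hf : Function.Injective f := by
    intro p q hpq
    fin_cases p <;> fin_cases q <;> simp_all [f, huv.ne, hxy.ne, eq_comm]
  refine h.not_isIndContained ⟨⟨⟨f, hf⟩, fun {p q} => ?_⟩⟩
  fin_cases p <;> fin_cases q <;>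
    simp_all [f, tP2graph, adj_comm]

@[simp] theorem KboxI_adj_inl_inl {r : ℕ} {i j : Fin r} :
    (KboxI r).Adj (.inl i) (.inl j) ↔ i ≠ j := by
  simp [KboxI]

@[simp] theorem KboxI_adj_inl_inr {r : ℕ} {i j : Fin r} :
    (KboxI r).Adj (.inl i) (.inr j) ↔ i = j := by
  simp [KboxI, eq_comm]

@[simp] theorem KboxI_adj_inr_inl {r : ℕ} {i j : Fin r} :
    (KboxI r).Adj (.inr i) (.inl j) ↔ i = j := by
  simp [KboxI, eq_comm]

@[simp] theorem KboxI_adj_inr_inr {r : ℕ} {i j : Fin r} :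
    ¬ (KboxI r).Adj (.inr i) (.inr j) := by
  simp [KboxI]

theorem not_hFree_KboxI [Fintype ι] {r : ℕ} (hr : r ≤ Fintype.card ι) {G : SimpleGraph V}
    {a b : ι → V} (hab : ∀ i, G.Adj (a i) (b i)) (ha : G.comap a = ⊤) (hb : G.comap b = ⊥)
    (hcross : ∀ i j, i ≠ j → ¬ G.Adj (a i) (b j)) : ¬ HFree G (KboxI r) := by
  have hA : ∀ i j, G.Adj (a i) (a j) ↔ i ≠ j := fun i j => by
    rw [← comap_adj (f := a), ha, top_adj]
  have hB : ∀ i j, ¬ G.Adj (b i) (b j) := fun i j => by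
    rw [← comap_adj (f := b), hb]; exact id
  have hAB : ∀ i j, G.Adj (a i) (b j) ↔ i = j := fun i j =>
    ⟨fun h => of_not_not fun hne => hcross i j hne h, fun h => h ▸ hab i⟩
  obtain ⟨e⟩ : Nonempty (Fin r ↪ ι) :=
    Function.Embedding.nonempty_of_card_le (by rwa [Fintype.card_fin])
  let f : Fin r ⊕ Fin r → V := Sum.elim (a ∘ e) (b ∘ e)
  have hf : ∀ x y, G.Adj (f x) (f y) ↔ (KboxI r).Adj x y := by
    rintro (i | i) (j | j) <;>
      simp [f, hA, hAB, hB, G.adj_comm (b _), e.injective.eq_iff, eq_comm]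
  have hinj : Function.Injective f := by
    rintro (i | i) (j | j) hij <;>
      simp only [f, Sum.elim_inl, Sum.elim_inr, Function.comp_apply, Sum.inl.injEq,
        Sum.inr.injEq, reduceCtorEq] at hij ⊢
    · by_contra hne
      have h := (hA (e i) (e j)).mpr (e.injective.ne hne)
      rw [hij] at h
      exact h.ne rfl
    · have h := (hab (e i)).symm
      rw [hij] at h
      exact hB _ _ h
    · have h := (hab (e j)).symm
      rw [← hij] at h
      exact hB _ _ h
    · by_contra hne
      have h := hab (e i)
      rw [hij] at h
      exact hcross _ _ (e.injective.ne hne) h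
  exact fun h => h.not_isIndContained ⟨⟨⟨f, hinj⟩, hf _ _⟩⟩

theorem SimpleGraph.eq_bot_of_adj_of_sup_eq_top [Fintype ι] (hι : 6 ≤ Fintype.card ι)
    {P Q : SimpleGraph ι} (hPQ : P ⊔ Q = ⊤)
    (hdisj : ∀ i j k l, P.Adj i j → Q.Adj k l → i = k ∨ i = l ∨ j = k ∨ j = l)
    {i j : ι} (hij : P.Adj i j) : Q = ⊥ := by
  classical
  ext k l
  simp only [bot_adj, iff_false]
  intro hkl
  have hcompl : 1 < ({i, j, k, l} : Finset ι)ᶜ.card := by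
    have := Finset.card_le_four (a := i) (b := j) (c := k) (d := l)
    rw [Finset.card_compl]
    omega
  obtain ⟨s, hs, t, ht, hst⟩ := Finset.one_lt_card.mp hcompl
  simp only [Finset.mem_compl, Finset.mem_insert, Finset.mem_singleton, not_or] at hs ht
  have hst' : (P ⊔ Q).Adj s t := hPQ ▸ hst
  rcases hst' with hP | hQ
  · rcases hdisj s t k l hP hkl with h | h | h | h <;> tauto
  · rcases hdisj i j s t hij hQ with h | h | h | h <;> subst h <;> tauto

theorem IsInducedCutMatching.card_lt {G : SimpleGraph V} {X Y : Set V} {M : Finset (V × V)}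
    (hM : IsInducedCutMatching G X Y M) {r : ℕ} (h1 : HFree G (KboxI r))
    (h2 : HFree G (tP2graph 2)) : M.card < max 6 r := by
  by_contra! hcard
  rw [← Fintype.card_coe, max_le_iff] at hcard
  let a : M → V := fun p => p.1.1
  let b : M → V := fun p => p.1.2
  have hab : ∀ p, G.Adj (a p) (b p) := fun p => (hM.1 _ p.2).2.2
  have hcross : ∀ p q, p ≠ q → ¬ G.Adj (a p) (b q) := fun p q hpq =>
    (hM.2 _ p.2 _ q.2 (Subtype.coe_injective.ne hpq)).2.2.2.2.1
  have hPQ : G.comap a ⊔ G.comap b = ⊤ := by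
    ext p q
    simp only [sup_adj, comap_adj, top_adj]
    refine ⟨fun h => h.elim (·.ne ∘ congrArg a) (·.ne ∘ congrArg b), fun hpq => ?_⟩
    rcases h2.adj_between_of_adj_of_adj (hab p) (hab q) with h | h | h | h
    · exact .inl h
    · exact absurd h (hcross p q hpq)
    · exact absurd h.symm (hcross q p (Ne.symm hpq))
    · exact .inr h
  have hdisj : ∀ i j k l, (G.comap a).Adj i j → (G.comap b).Adj k l →
      i = k ∨ i = l ∨ j = k ∨ j = l := by
    intro i j k l hij hkl
    by_contra! hne
    rcases h2.adj_between_of_adj_of_adj hij hkl with h | h | h | h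
    exacts [hcross _ _ hne.1 h, hcross _ _ hne.2.1 h, hcross _ _ hne.2.2.1 h,
      hcross _ _ hne.2.2.2 h]
  by_cases hP : G.comap a = ⊥
  · rw [hP, bot_sup_eq] at hPQ
    exact not_hFree_KboxI hcard.2 (fun p => (hab p).symm) hPQ hP
      (fun p q hpq h => hcross q p (Ne.symm hpq) h.symm) h1
  · obtain ⟨i, j, hij⟩ := ne_bot_iff_exists_adj.mp hP
    have hQ := SimpleGraph.eq_bot_of_adj_of_sup_eq_top hcard.1 hPQ hdisj hij
    rw [hQ, sup_bot_eq] at hPQ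
    exact not_hFree_KboxI hcard.2 hab hPQ hQ hcross h1

theorem Nat.sSup_lt_of_forall_lt {s : Set ℕ} {m : ℕ} (hm : 0 < m) (h : ∀ n ∈ s, n < m) :
    sSup s < m :=
  Nat.lt_of_le_pred hm (csSup_le' fun n hn => Nat.le_pred_of_lt (h n hn))

theorem cutmim_lt_max {G : SimpleGraph V} {r : ℕ} (h1 : HFree G (KboxI r))
    (h2 : HFree G (tP2graph 2)) (X Y : Set V) : cutmim G X Y < max 6 r :=
  Nat.sSup_lt_of_forall_lt (by omega) fun _ ⟨_, hM, hcard⟩ => hcard ▸ hM.card_lt h1 h2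

theorem mimw_lt_of_forall_cutmim_lt {G : SimpleGraph V} {m : ℕ} (hm : 0 < m)
    (h : ∀ X : Set V, cutmim G X Xᶜ < m) : mimw G < m := by
  rcases Set.eq_empty_or_nonempty {n | ∃ B : BranchDecomp G, B.width = n} with hE | hne
  · rwa [mimw, hE, Nat.sInf_empty]
  · obtain ⟨B, hB⟩ := Nat.sInf_mem hne
    rw [mimw, ← hB]
    exact Nat.sSup_lt_of_forall_lt hm fun _ ⟨_, _, _, hn⟩ => hn ▸ h _

end

theorem KboxI_2P2_free_mimw_general {V : Type*} (r : ℕ)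
    (G : SimpleGraph V) (h1 : HFree G (KboxI r)) (h2 : HFree G (tP2graph 2)) :
    (∀ X : Set V, cutmim G X Xᶜ < max 6 r) ∧ mimw G < max 6 r :=
  have hcut : ∀ X : Set V, cutmim G X Xᶜ < max 6 r := fun X => cutmim_lt_max h1 h2 X Xᶜ
  ⟨hcut, mimw_lt_of_forall_cutmim_lt (by omega) hcut⟩

/-- Let `r ≥ 3` and let `G` be a `(K_r ⊟ rP₁, 2P₂)`-free graph.  Then
`cutmim_G(X, V(G) ∖ X) < max 6 r` for every `X ⊆ V(G)`; in particular
`mimw(G) < max 6 r`. -/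
theorem KboxI_2P2_free_mimw {V : Type*} [Finite V] (r : ℕ) (hr : 3 ≤ r)
    (G : SimpleGraph V) (h1 : HFree G (KboxI r)) (h2 : HFree G (tP2graph 2)) :
    (∀ X : Set V, cutmim G X Xᶜ < max 6 r) ∧ mimw G < max 6 r :=
  KboxI_2P2_free_mimw_general r G h1 h2
end

section
/- Let r ≥ 1 and t ≥ 1, and let G be a (K_r ⊟ P_1, tP_2)-free graph. Then for every X ⊆ V(G), cutmim_G(X, V(G)∖X) < R(r, R(r,t)). In particular, mimw(G) < R(r, R(r,t)). -/
open SimpleGraph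

def RProp (a b N : ℕ) : Prop := ∀ M : ℕ, N ≤ M → ∀ G : SimpleGraph (Fin M),
  (∃ s : Finset (Fin M), G.IsNClique a s) ∨ (∃ s : Finset (Fin M), Gᶜ.IsNClique b s)

lemma clique_map' {m M k : ℕ} (f : Fin m → Fin M) (hf : Function.Injective f)
    (G : SimpleGraph (Fin M)) (s : Finset (Fin m)) (h : (G.comap f).IsNClique k s) :
    G.IsNClique k (s.image f) := by
  constructor
  · rintro x hx y hy hxy
    simp only [Finset.coe_image, Set.mem_image, Finset.mem_coe] at hx hy
    obtain ⟨i, hi, rfl⟩ := hx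
    obtain ⟨j, hj, rfl⟩ := hy
    exact h.1 hi hj (fun e => hxy (by rw [e]))
  · rw [Finset.card_image_of_injective _ hf]; exact h.2

lemma comap_compl' {m M : ℕ} (f : Fin m → Fin M) (hf : Function.Injective f)
    (G : SimpleGraph (Fin M)) : Gᶜ.comap f = (G.comap f)ᶜ := by
  ext x y
  simp only [comap_adj, compl_adj, ne_eq, hf.ne_iff]

lemma rprop_exists (a b : ℕ) : ∃ N, RProp a b N := by
  induction a generalizing b with
  | zero => exact ⟨0, fun M _ G => Or.inl ⟨∅, by simp [isNClique_empty]⟩⟩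
  | succ a ih =>
    induction b with
    | zero => exact ⟨0, fun M _ G => Or.inr ⟨∅, by simp [isNClique_empty]⟩⟩
    | succ b ihb =>
      obtain ⟨N₁, h₁⟩ := ih (b + 1)
      obtain ⟨N₂, h₂⟩ := ihb
      refine ⟨N₁ + N₂ + 1, ?_⟩
      intro M hM G
      classical
      have hMpos : 0 < M := by omega
      set v : Fin M := ⟨0, hMpos⟩ with hv
      set A : Finset (Fin M) := Finset.univ.filter (fun u => G.Adj v u) with hA
      set B : Finset (Fin M) := Finset.univ.filter (fun u => u ≠ v ∧ ¬ G.Adj v u) with hB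
      have hunion : (Finset.univ : Finset (Fin M)) ⊆ A ∪ B ∪ {v} := by
        intro u _
        by_cases h1 : G.Adj v u
        · simp [hA, Finset.mem_union, h1]
        · by_cases h2 : u = v
          · simp [Finset.mem_union, h2]
          · simp [hB, Finset.mem_union, h1, h2]
      have hcard : M ≤ A.card + B.card + 1 := by
        have := Finset.card_le_card hunion
        have h3 := Finset.card_union_le (A ∪ B) {v}
        have h4 := Finset.card_union_le A B
        simp only [Finset.card_univ, Fintype.card_fin, Finset.card_singleton] at this h3
        omega
      have hAmem : ∀ u ∈ A, G.Adj v u := by intro u hu; simpa [hA] using hu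
      have hBmem : ∀ u ∈ B, u ≠ v ∧ ¬ G.Adj v u := by intro u hu; simpa [hB] using hu
      rcases (by omega : N₁ ≤ A.card ∨ N₂ ≤ B.card) with hc | hc
      · -- neighbors
        set f : Fin A.card → Fin M := fun j => (A.equivFin.symm j : Fin M) with hf
        have hfinj : Function.Injective f := by
          intro i j hij
          exact A.equivFin.symm.injective (Subtype.ext hij)
        have hfA : ∀ j, f j ∈ A := fun j => (A.equivFin.symm j).2
        rcases h₁ A.card hc (G.comap f) with ⟨s, hs⟩ | ⟨s, hs⟩
        · left
          have him := clique_map' f hfinj G s hs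
          have hvnot : v ∉ s.image f := by
            intro hvm
            obtain ⟨j, _, hj⟩ := Finset.mem_image.mp hvm
            exact G.irrefl (hj ▸ hAmem _ (hfA j))
          refine ⟨insert v (s.image f), him.insert ?_⟩
          intro u hu
          obtain ⟨j, _, rfl⟩ := Finset.mem_image.mp hu
          exact hAmem _ (hfA j)
        · right
          rw [← comap_compl' f hfinj] at hs
          exact ⟨s.image f, clique_map' f hfinj Gᶜ s hs⟩
      · -- non-neighbors
        set f : Fin B.card → Fin M := fun j => (B.equivFin.symm j : Fin M) with hf
        have hfinj : Function.Injective f := by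
          intro i j hij
          exact B.equivFin.symm.injective (Subtype.ext hij)
        have hfB : ∀ j, f j ∈ B := fun j => (B.equivFin.symm j).2
        rcases h₂ B.card hc (G.comap f) with ⟨s, hs⟩ | ⟨s, hs⟩
        · exact Or.inl ⟨s.image f, clique_map' f hfinj G s hs⟩
        · right
          rw [← comap_compl' f hfinj] at hs
          have him := clique_map' f hfinj Gᶜ s hs
          have hvnot : v ∉ s.image f := by
            intro hvm
            obtain ⟨j, _, hj⟩ := Finset.mem_image.mp hvm
            exact (hBmem _ (hfB j)).1 hj
          refine ⟨insert v (s.image f), him.insert ?_⟩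
          intro u hu
          obtain ⟨j, _, rfl⟩ := Finset.mem_image.mp hu
          have := hBmem _ (hfB j)
          exact (SimpleGraph.compl_adj _ _ _).mpr ⟨this.1.symm, this.2⟩

lemma ramsey_prop (a b : ℕ) : RProp a b (ramsey a b) :=
  Nat.sInf_mem (rprop_exists a b)

lemma one_le_ramsey {a b : ℕ} (ha : 1 ≤ a) (hb : 1 ≤ b) : 1 ≤ ramsey a b := by
  by_contra h
  have h0 : ramsey a b ≤ 0 := by omega
  have := ramsey_prop a b 0 h0 ⊥
  rcases this with ⟨s, hs⟩ | ⟨s, hs⟩ <;>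
  · have hse : s = ∅ := Finset.eq_empty_of_isEmpty s
    have hc := hs.2
    rw [hse] at hc
    simp at hc
    omega



lemma lemA {V : Type*} (G : SimpleGraph V) (r : ℕ) [NeZero r] (a : Fin r → V) (b : V)
    (hainj : Function.Injective a) (hab : ∀ i, a i ≠ b)
    (hclique : ∀ i j, i ≠ j → G.Adj (a i) (a j))
    (h0 : G.Adj (a 0) b) (hpend : ∀ i, i ≠ 0 → ¬ G.Adj (a i) b) :
    ¬ HFree G (KboxP1 r) := by
  intro hfree
  apply hfree
  set φ : Fin r ⊕ Unit → V := Sum.elim a (fun _ => b) with hφ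
  have hinj : Function.Injective φ := by
    rintro (i | u) (j | u') h <;>
      simp only [hφ, Sum.elim_inl, Sum.elim_inr] at h
    · exact congrArg Sum.inl (hainj h)
    · exact absurd h (hab i)
    · exact absurd h.symm (hab j)
    · rfl
  refine ⟨Set.range φ, ⟨(RelIso.mk (Equiv.ofInjective φ hinj) ?_).symm⟩⟩
  rintro (x | v) (y | v') <;>
    simp only [Equiv.ofInjective_apply, comap_adj, Function.Embedding.coe_subtype, KboxP1,
      fromRel_adj, hφ, Sum.elim_inl, Sum.elim_inr, ne_eq, Sum.inl.injEq, Sum.inr.injEq,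
      reduceCtorEq, exists_eq_left, exists_and_left, exists_eq', and_true, true_and,
      exists_eq_left', false_and, and_false, exists_false, or_false, false_or, or_self,
      exists_const, not_false_eq_true, iff_true, true_iff, and_self]
  · constructor
    · intro h e
      exact G.irrefl (e ▸ h)
    · intro h
      exact hclique x y h
  · constructor
    · intro h
      by_contra hi
      exact hpend x (fun e => hi (by simp [e])) h
    · intro h
      have : x = 0 := Fin.ext (by simpa using h)
      exact this ▸ h0
  · constructor
    · intro h
      by_contra hj
      exact hpend y (fun e => hj (by simp [e])) h.symm
    · intro h
      have : y = 0 := Fin.ext (by simpa using h)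
      exact (this ▸ h0).symm
  · exact iff_of_false (G.irrefl) (by simp)



lemma lemB {V : Type*} (G : SimpleGraph V) (t : ℕ) (a b : Fin t → V)
    (hainj : Function.Injective a) (hbinj : Function.Injective b)
    (hab : ∀ i j, a i ≠ b j)
    (hm : ∀ i, G.Adj (a i) (b i))
    (hna : ∀ i j, i ≠ j → ¬ G.Adj (a i) (a j))
    (hnb : ∀ i j, i ≠ j → ¬ G.Adj (b i) (b j))
    (hcross : ∀ i j, i ≠ j → ¬ G.Adj (a i) (b j)) :
    ¬ HFree G (tP2graph t) := by
  intro hfree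
  apply hfree
  set φ : Fin t × Fin 2 → V := fun p => if p.2 = 0 then a p.1 else b p.1 with hφ
  have hinj : Function.Injective φ := by
    rintro ⟨i, x⟩ ⟨j, y⟩ h
    fin_cases x <;> fin_cases y <;> simp only [hφ, Fin.isValue, if_true, if_false,
      reduceIte] at h <;> simp only [Prod.mk.injEq, Fin.isValue]
    · exact ⟨hainj h, trivial⟩
    · exact absurd h (hab i j)
    · exact absurd h.symm (hab j i)
    · exact ⟨hbinj h, trivial⟩
  refine ⟨Set.range φ, ⟨(RelIso.mk (Equiv.ofInjective φ hinj) ?_).symm⟩⟩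
  rintro ⟨i, x⟩ ⟨j, y⟩
  fin_cases x <;> fin_cases y <;>
    simp [hφ, tP2graph, Prod.mk.injEq]
  · constructor
    · intro h
      rcases eq_or_ne i j with rfl | hij
      · exact absurd h G.irrefl
      · exact absurd h (hna i j hij)
    · rintro ⟨hne', rfl | rfl⟩ <;> exact absurd rfl hne'
  · constructor
    · intro h
      rcases eq_or_ne i j with rfl | hij
      · exact Or.inl rfl
      · exact absurd h (hcross i j hij)
    · rintro (rfl | rfl)
      · exact hm _
      · exact hm _
  · constructor
    · intro h
      rcases eq_or_ne i j with rfl | hij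
      · exact Or.inl rfl
      · exact absurd h.symm (hcross j i hij.symm)
    · rintro (rfl | rfl)
      · exact (hm _).symm
      · exact (hm _).symm
  · constructor
    · intro h
      rcases eq_or_ne i j with rfl | hij
      · exact absurd h G.irrefl
      · exact absurd h (hnb i j hij)
    · rintro ⟨hne', rfl | rfl⟩ <;> exact absurd rfl hne'

lemma matching_lt {V : Type*} (r t : ℕ) (hr : 1 ≤ r) (ht : 1 ≤ t)
    (G : SimpleGraph V) (h1 : HFree G (KboxP1 r)) (h2 : HFree G (tP2graph t))
    (X : Set V) (M : Finset (V × V)) (hM : IsInducedCutMatching G X Xᶜ M) :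
    M.card < ramsey r (ramsey r t) := by
  haveI : NeZero r := ⟨by omega⟩
  by_contra hc
  push_neg at hc
  obtain ⟨hmem, hind⟩ := hM
  set e : Fin M.card → V × V := fun i => (M.equivFin.symm i : V × V) with he
  have heM : ∀ i, e i ∈ M := fun i => (M.equivFin.symm i).2
  have heinj : Function.Injective e := fun i j h => by
    have := M.equivFin.symm.injective (Subtype.ext h)
    exact this
  have hL : ∀ p ∈ M, p.1 ∈ X := fun p hp => (hmem p hp).1
  have hR : ∀ p ∈ M, p.2 ∈ Xᶜ := fun p hp => (hmem p hp).2.1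
  have hAdj : ∀ p ∈ M, G.Adj p.1 p.2 := fun p hp => (hmem p hp).2.2
  set G₁ : SimpleGraph (Fin M.card) := G.comap (fun i => (e i).1) with hG₁
  rcases ramsey_prop r (ramsey r t) M.card hc G₁ with ⟨s, hs⟩ | ⟨s, hs⟩
  · -- clique of size r among left endpoints
    have hsne : s.Nonempty := Finset.card_pos.mp (by rw [hs.2]; omega)
    obtain ⟨i₀, hi₀⟩ := hsne
    set k : Fin r := finCongr hs.2 (s.equivFin ⟨i₀, hi₀⟩) with hk
    set σ : Equiv.Perm (Fin r) := Equiv.swap 0 k with hσ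
    set g : Fin r → Fin M.card :=
      fun j => (s.equivFin.symm (finCongr hs.2.symm (σ j)) : Fin M.card) with hg
    have hgs : ∀ j, g j ∈ s := fun j => (s.equivFin.symm _).2
    have hginj : Function.Injective g := by
      intro i j hij
      exact σ.injective ((finCongr hs.2.symm).injective
        (s.equivFin.symm.injective (Subtype.ext hij)))
    have hg0 : g 0 = i₀ := by
      have hcc : ∀ y : Fin s.card, (finCongr hs.2.symm) ((finCongr hs.2) y) = y := by
        intro y; ext; simp
      simp only [hg, hσ, hk, Equiv.swap_apply_left, hcc, Equiv.symm_apply_apply]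
    set a : Fin r → V := fun j => (e (g j)).1 with ha
    set b : V := (e i₀).2 with hb
    have hpairs : ∀ i j : Fin r, i ≠ j → e (g i) ≠ e (g j) :=
      fun i j hij h => hij (hginj (heinj h))
    refine lemA G r a b ?_ ?_ ?_ ?_ ?_ h1
    · intro i j hij
      by_contra hne
      have hij' : i ≠ j := fun h => hne (by rw [h])
      exact (hind _ (heM (g i)) _ (heM (g j)) (hpairs i j hij')).1 hij
    · intro i h
      have h1' : (e (g i)).1 ∈ X := hL _ (heM (g i))
      have h2' : ¬ (e i₀).2 ∈ X := hR _ (heM i₀)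
      change (e (g i)).1 = (e i₀).2 at h
      rw [h] at h1'
      exact h2' h1'
    · intro i j hij
      exact hs.1 (hgs i) (hgs j) (fun h => hij (hginj h))
    · have h0' : a 0 = (e i₀).1 := by
        show (e (g 0)).1 = (e i₀).1
        rw [hg0]
      rw [h0', hb]
      exact hAdj _ (heM i₀)
    · intro i hi
      have hne : e (g i) ≠ e i₀ := by
        rw [← hg0]
        exact hpairs i 0 hi
      exact (hind _ (heM i₀) _ (heM (g i)) hne.symm).2.2.2.2.2
  · -- independent set of size R(r,t) among left endpoints
    set e₂ : Fin s.card → Fin M.card := fun j => (s.equivFin.symm j : Fin M.card) with he₂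
    have he₂s : ∀ j, e₂ j ∈ s := fun j => (s.equivFin.symm j).2
    have he₂inj : Function.Injective e₂ := fun i j h => by
      have := s.equivFin.symm.injective (Subtype.ext h)
      exact this
    set G₂ : SimpleGraph (Fin s.card) := G.comap (fun j => (e (e₂ j)).2) with hG₂
    have hscard : ramsey r t ≤ s.card := le_of_eq hs.2.symm
    rcases ramsey_prop r t s.card hscard G₂ with ⟨s₂, hs₂⟩ | ⟨s₂, hs₂⟩
    · -- clique of size r among right endpoints
      have hsne : s₂.Nonempty := Finset.card_pos.mp (by rw [hs₂.2]; omega)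
      obtain ⟨j₀, hj₀⟩ := hsne
      set k : Fin r := finCongr hs₂.2 (s₂.equivFin ⟨j₀, hj₀⟩) with hk
      set σ : Equiv.Perm (Fin r) := Equiv.swap 0 k with hσ
      set g : Fin r → Fin s.card :=
        fun j => (s₂.equivFin.symm (finCongr hs₂.2.symm (σ j)) : Fin s.card) with hg
      have hgs : ∀ j, g j ∈ s₂ := fun j => (s₂.equivFin.symm _).2
      have hginj : Function.Injective g := by
        intro i j hij
        exact σ.injective ((finCongr hs₂.2.symm).injective
          (s₂.equivFin.symm.injective (Subtype.ext hij)))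
      have hg0 : g 0 = j₀ := by
        have hcc : ∀ y : Fin s₂.card, (finCongr hs₂.2.symm) ((finCongr hs₂.2) y) = y := by
          intro y; ext; simp
        simp only [hg, hσ, hk, Equiv.swap_apply_left, hcc, Equiv.symm_apply_apply]
      set a : Fin r → V := fun i => (e (e₂ (g i))).2 with ha
      set b : V := (e (e₂ j₀)).1 with hb
      have hpairs : ∀ i j : Fin r, i ≠ j → e (e₂ (g i)) ≠ e (e₂ (g j)) :=
        fun i j hij h => hij (hginj (he₂inj (heinj h)))
      refine lemA G r a b ?_ ?_ ?_ ?_ ?_ h1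
      · intro i j hij
        by_contra hne
        have hij' : i ≠ j := fun h => hne (by rw [h])
        exact (hind _ (heM _) _ (heM _) (hpairs i j hij')).2.1 hij
      · intro i h
        have h2' : ¬ (e (e₂ (g i))).2 ∈ X := hR _ (heM (e₂ (g i)))
        have h1' : (e (e₂ j₀)).1 ∈ X := hL _ (heM (e₂ j₀))
        change (e (e₂ (g i))).2 = (e (e₂ j₀)).1 at h
        rw [← h] at h1'
        exact h2' h1'
      · intro i j hij
        exact hs₂.1 (hgs i) (hgs j) (fun h => hij (hginj h))
      · have h0' : a 0 = (e (e₂ j₀)).2 := by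
          show (e (e₂ (g 0))).2 = (e (e₂ j₀)).2
          rw [hg0]
        rw [h0', hb]
        exact (hAdj _ (heM (e₂ j₀))).symm
      · intro i hi hadj
        have hne : e (e₂ (g i)) ≠ e (e₂ j₀) := by
          rw [← hg0]
          exact hpairs i 0 hi
        exact (hind _ (heM (e₂ j₀)) _ (heM (e₂ (g i))) hne.symm).2.2.2.2.1 hadj.symm
    · -- independent set of size t among right endpoints : tP₂
      set g : Fin t → Fin s.card :=
        fun j => (s₂.equivFin.symm (finCongr hs₂.2.symm j) : Fin s.card) with hg
      have hgs : ∀ j, g j ∈ s₂ := fun j => (s₂.equivFin.symm _).2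
      have hginj : Function.Injective g := by
        intro i j hij
        exact (finCongr hs₂.2.symm).injective
          (s₂.equivFin.symm.injective (Subtype.ext hij))
      set P : Fin t → V × V := fun j => e (e₂ (g j)) with hP
      have hPM : ∀ j, P j ∈ M := fun j => heM _
      have hPinj : Function.Injective P := fun i j h => hginj (he₂inj (heinj h))
      have hpairs : ∀ i j : Fin t, i ≠ j → P i ≠ P j := fun i j hij h => hij (hPinj h)
      refine lemB G t (fun j => (P j).1) (fun j => (P j).2) ?_ ?_ ?_ ?_ ?_ ?_ ?_ h2
      · intro i j h
        by_contra hne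
        change (P i).1 = (P j).1 at h
        exact (hind _ (hPM i) _ (hPM j) (hpairs i j hne)).1 h
      · intro i j h
        by_contra hne
        change (P i).2 = (P j).2 at h
        exact (hind _ (hPM i) _ (hPM j) (hpairs i j hne)).2.1 h
      · intro i j h
        have h1' : (P i).1 ∈ X := hL _ (hPM i)
        have h2' : ¬ (P j).2 ∈ X := hR _ (hPM j)
        change (P i).1 = (P j).2 at h
        rw [h] at h1'
        exact h2' h1'
      · intro i
        exact hAdj _ (hPM i)
      · intro i j hij hadj
        have h1' := hs.1 (he₂s (g i)) (he₂s (g j)) (fun h => hij (hginj (he₂inj h)))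
        rw [SimpleGraph.compl_adj] at h1'
        exact h1'.2 hadj
      · intro i j hij hadj
        have h1' := hs₂.1 (hgs i) (hgs j) (fun h => hij (hginj h))
        rw [SimpleGraph.compl_adj] at h1'
        exact h1'.2 hadj
      · intro i j hij hadj
        exact (hind _ (hPM i) _ (hPM j) (hpairs i j hij)).2.2.2.2.1 hadj

/-- Let `r, t ≥ 1` and let `G` be a `(K_r ⊟ P₁, tP₂)`-free graph.
Then `cutmim_G(X, V(G) ∖ X) < R(r, R(r,t))` for every `X ⊆ V(G)`; in particular
`mimw(G) < R(r, R(r,t))`. -/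
theorem KboxP1_tP2_free_mimw {V : Type*} [Finite V] (r t : ℕ) (hr : 1 ≤ r) (ht : 1 ≤ t)
    (G : SimpleGraph V) (h1 : HFree G (KboxP1 r)) (h2 : HFree G (tP2graph t)) :
    (∀ X : Set V, cutmim G X Xᶜ < ramsey r (ramsey r t)) ∧
      mimw G < ramsey r (ramsey r t) := by
  have hN1 : 1 ≤ ramsey r (ramsey r t) := one_le_ramsey hr (one_le_ramsey hr ht)
  have key : ∀ X : Set V, cutmim G X Xᶜ < ramsey r (ramsey r t) := by
    intro X
    set S : Set ℕ :=
      {n : ℕ | ∃ M : Finset (V × V), IsInducedCutMatching G X Xᶜ M ∧ M.card = n} with hS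
    have hbdd : ∀ n ∈ S, n < ramsey r (ramsey r t) := by
      rintro n ⟨M, hM, rfl⟩
      exact matching_lt r t hr ht G h1 h2 X M hM
    have h0S : (0 : ℕ) ∈ S := by
      refine ⟨∅, ⟨?_, ?_⟩, rfl⟩
      · intro p hp
        exact absurd hp (Finset.notMem_empty p)
      · intro p hp
        exact absurd hp (Finset.notMem_empty p)
    have hBdd : BddAbove S := ⟨ramsey r (ramsey r t), fun n hn => (hbdd n hn).le⟩
    exact hbdd _ (Nat.sSup_mem ⟨0, h0S⟩ hBdd)
  refine ⟨key, ?_⟩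
  show sInf {n : ℕ | ∃ B : BranchDecomp G, B.width = n} < ramsey r (ramsey r t)
  rcases Set.eq_empty_or_nonempty {n : ℕ | ∃ B : BranchDecomp G, B.width = n} with hT | hT
  · rw [hT, Nat.sInf_empty]
    omega
  · obtain ⟨B, hB⟩ := Nat.sInf_mem hT
    rw [← hB]
    show sSup {n : ℕ | ∃ a b : B.L, B.T.Adj a b ∧ n = cutmim G (B.side a b) (B.side a b)ᶜ} <
      ramsey r (ramsey r t)
    set W : Set ℕ :=
      {n : ℕ | ∃ a b : B.L, B.T.Adj a b ∧ n = cutmim G (B.side a b) (B.side a b)ᶜ} with hW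
    have hbddW : ∀ n ∈ W, n < ramsey r (ramsey r t) := by
      rintro n ⟨x, y, hxy, rfl⟩
      exact key _
    rcases Set.eq_empty_or_nonempty W with hWe | hWne
    · rw [hWe, csSup_empty, Nat.bot_eq_zero]
      omega
    · exact hbddW _ (Nat.sSup_mem hWne ⟨ramsey r (ramsey r t), fun n hn => (hbddW n hn).le⟩)
end
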